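/- Let (E, E', F_1, …, F_t, G_1, …, G_{t'}) be a sequence of subspaces of a fixed vector space with E ∩ E' = 0. Then this sequence is (t,t')-bidistributive if and only if the triple (Σ_{j=1}^t F_j + Σ_{j'=1}^{t'} G_{j'}, E, E') and the sequences (E, F_1, …, F_t, G_1, …, G_{t'}) and (E', F_1, …, F_t, G_1, …, G_{t'}) are distributive, and moreover Σ_{j'=1}^{t'} (E ∩ G_{j'}) ⊆ Σ_{j=1}^t (E ∩ F_j) and Σ_{j=1}^t (E' ∩ F_j) ⊆ Σ_{j'=1}^{t'} (E' ∩ G_{j'}). -/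

import Mathlib

/-- A tuple `(E, F₁, …, Fₜ)` of subspaces of a vector space is *distributive* if
`E ∩ (Σⱼ Fⱼ) = Σⱼ (E ∩ Fⱼ)`. -/
def IsDistributive {k V α : Type*} [Field k] [AddCommGroup V] [Module k V]
    (E : Submodule k V) (F : α → Submodule k V) : Prop :=
  E ⊓ (⨆ j, F j) = ⨆ j, E ⊓ F j

/-- A tuple `(E, E', F₁, …, Fₜ, G₁, …, G_{t'})` of subspaces is *(t,t')-bidistributive* if
`E ∩ E' = 0` and `(E ⊕ E') ∩ (Σⱼ Fⱼ + Σⱼ' Gⱼ') = Σⱼ (E ∩ Fⱼ) ⊕ Σⱼ' (E' ∩ Gⱼ')`. -/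
def IsBidistributive {k V : Type*} [Field k] [AddCommGroup V] [Module k V] {t t' : ℕ}
    (E E' : Submodule k V) (F : Fin t → Submodule k V) (G : Fin t' → Submodule k V) : Prop :=
  E ⊓ E' = ⊥ ∧
    (E ⊔ E') ⊓ ((⨆ j, F j) ⊔ ⨆ j', G j') = (⨆ j, E ⊓ F j) ⊔ ⨆ j', E' ⊓ G j'

/-!
Put `S = Σ Fⱼ + Σ Gⱼ'`. Since `E ∩ E' = 0`, the modular law gives `E ∩ (a + b) = a` whenever
`a ≤ E` and `b ≤ E'`; intersecting the bidistributivity identity `(E + E') ∩ S = A + B'`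
(with `A = Σ E ∩ Fⱼ`, `B' = Σ E' ∩ Gⱼ'`) with `E` and with `E'` therefore splits it into
`E ∩ S = A`, `E' ∩ S = B'` and `(E + E') ∩ S = (S ∩ E) + (S ∩ E')`. Finally, as
`Σ E ∩ Gⱼ' ≤ E ∩ S` always holds, `E ∩ S = A` says exactly that `(E, F, G)` is distributive
and `Σ E ∩ Gⱼ' ≤ A`; symmetrically for `E'`.
-/

section Lattice

variable {α : Type*}

theorem iSup_fin_two [CompleteLattice α] (f : Fin 2 → α) : ⨆ j, f j = f 0 ⊔ f 1 :=
  le_antisymm (iSup_le (Fin.forall_fin_two.2 ⟨le_sup_left, le_sup_right⟩))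
    (sup_le (le_iSup f 0) (le_iSup f 1))

theorem eq_sup_and_le_iff_eq [Lattice α] {x a b : α} (hb : b ≤ x) :
    x = a ⊔ b ∧ b ≤ a ↔ x = a := by
  refine ⟨fun ⟨hx, hba⟩ => hx.trans (sup_eq_left.2 hba), fun hx => ?_⟩
  subst hx
  exact ⟨(sup_eq_left.2 hb).symm, hb⟩

variable [Lattice α] [OrderBot α] [IsModularLattice α] {E E' a b : α}

theorem Disjoint.inf_sup_eq_left (h : Disjoint E E') (ha : a ≤ E) (hb : b ≤ E') :
    E ⊓ (a ⊔ b) = a := by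
  rw [inf_comm, sup_inf_assoc_of_le _ ha, (h.mono_right hb).symm.eq_bot, sup_bot_eq]

theorem Disjoint.inf_sup_eq_right (h : Disjoint E E') (ha : a ≤ E) (hb : b ≤ E') :
    E' ⊓ (a ⊔ b) = b := by
  rw [sup_comm]
  exact h.symm.inf_sup_eq_left hb ha

theorem Disjoint.sup_inf_eq_sup_iff (h : Disjoint E E') {S : α} (ha : a ≤ E) (hb : b ≤ E') :
    (E ⊔ E') ⊓ S = a ⊔ b ↔
      S ⊓ (E ⊔ E') = S ⊓ E ⊔ S ⊓ E' ∧ E ⊓ S = a ∧ E' ⊓ S = b := by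
  have hE : E ⊓ ((E ⊔ E') ⊓ S) = E ⊓ S := by rw [← inf_assoc, inf_sup_self]
  have hE' : E' ⊓ ((E ⊔ E') ⊓ S) = E' ⊓ S := by rw [← inf_assoc, sup_comm, inf_sup_self]
  constructor
  · intro hS
    have hES : E ⊓ S = a := by rw [← hE, hS, h.inf_sup_eq_left ha hb]
    have hE'S : E' ⊓ S = b := by rw [← hE', hS, h.inf_sup_eq_right ha hb]
    refine ⟨?_, hES, hE'S⟩
    rw [inf_comm S E, inf_comm S E', hES, hE'S, inf_comm, hS]
  · rintro ⟨hdistrib, hES, hE'S⟩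
    rw [inf_comm, hdistrib, inf_comm S E, inf_comm S E', hES, hE'S]

end Lattice

section Distributive

variable {k V : Type*} [Field k] [AddCommGroup V] [Module k V]

theorem isDistributive_pair_iff (S E E' : Submodule k V) :
    IsDistributive S ![E, E'] ↔ S ⊓ (E ⊔ E') = S ⊓ E ⊔ S ⊓ E' := by
  rw [IsDistributive, iSup_fin_two, iSup_fin_two]
  rfl

theorem isDistributive_sumElim_iff {β γ : Type*} (E : Submodule k V) (F : β → Submodule k V)
    (G : γ → Submodule k V) :
    IsDistributive E (Sum.elim F G) ↔
      E ⊓ ((⨆ j, F j) ⊔ ⨆ j', G j') = (⨆ j, E ⊓ F j) ⊔ ⨆ j', E ⊓ G j' := by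
  rw [IsDistributive, iSup_sum, iSup_sum]
  rfl

theorem isDistributive_sumElim_and_le_iff_left {β γ : Type*} (E : Submodule k V)
    (F : β → Submodule k V) (G : γ → Submodule k V) :
    IsDistributive E (Sum.elim F G) ∧ (⨆ j', E ⊓ G j') ≤ ⨆ j, E ⊓ F j ↔
      E ⊓ ((⨆ j, F j) ⊔ ⨆ j', G j') = ⨆ j, E ⊓ F j := by
  rw [isDistributive_sumElim_iff]
  exact eq_sup_and_le_iff_eq <|
    le_inf (iSup_le fun _ => inf_le_left) ((iSup_mono fun _ => inf_le_right).trans le_sup_right)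

theorem isDistributive_sumElim_and_le_iff_right {β γ : Type*} (E : Submodule k V)
    (F : β → Submodule k V) (G : γ → Submodule k V) :
    IsDistributive E (Sum.elim F G) ∧ (⨆ j, E ⊓ F j) ≤ ⨆ j', E ⊓ G j' ↔
      E ⊓ ((⨆ j, F j) ⊔ ⨆ j', G j') = ⨆ j', E ⊓ G j' := by
  rw [isDistributive_sumElim_iff, sup_comm (⨆ j, E ⊓ F j)]
  exact eq_sup_and_le_iff_eq <|
    le_inf (iSup_le fun _ => inf_le_left) ((iSup_mono fun _ => inf_le_right).trans le_sup_left)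

end Distributive

theorem bidistributive_iff {k V : Type*} [Field k] [AddCommGroup V] [Module k V] {t t' : ℕ}
    (E E' : Submodule k V) (F : Fin t → Submodule k V) (G : Fin t' → Submodule k V)
    (hEE' : E ⊓ E' = ⊥) :
    IsBidistributive E E' F G ↔
      (IsDistributive ((⨆ j, F j) ⊔ ⨆ j', G j') ![E, E'] ∧
        IsDistributive E (Sum.elim F G) ∧
        IsDistributive E' (Sum.elim F G)) ∧
      ((⨆ j', E ⊓ G j') ≤ ⨆ j, E ⊓ F j) ∧
        ((⨆ j, E' ⊓ F j) ≤ ⨆ j', E' ⊓ G j') := by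
  rw [IsBidistributive, and_iff_right hEE', (disjoint_iff.2 hEE').sup_inf_eq_sup_iff
      (iSup_le fun _ => inf_le_left) (iSup_le fun _ => inf_le_left), isDistributive_pair_iff,
    ← isDistributive_sumElim_and_le_iff_left, ← isDistributive_sumElim_and_le_iff_right]
  tauto
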